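/- For a profinite set S, a commutative ring A, and an A-module M, the natural map LC(S,A) ⊗_A M → LC(S,M), sending f ⊗ m to the function s ↦ f(s)·m, is an isomorphism of A-modules, where LC(S,−) denotes locally constant functions from S. -/
import Mathlib

open TensorProduct

/-- The natural `A`-bilinear map `LC(S,A) × M → LC(S,M)`, `(f, m) ↦ (s ↦ f(s) • m)`. -/
noncomputable def lcTensorMap (S : Type*) [TopologicalSpace S]
    (A : Type*) [CommRing A] (M : Type*) [AddCommGroup M] [Module A M] :
    TensorProduct A (LocallyConstant S A) M →ₗ[A] LocallyConstant S M :=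
  TensorProduct.lift (LinearMap.mk₂ A
    (fun f m => f.map (fun a => a • m))
    (by intro f g m; ext s; simp [add_smul])
    (by intro c f m; ext s; simp [mul_smul])
    (by intro f m n; ext s; simp [smul_add])
    (by intro c f m; ext s; simp [LocallyConstant.map_apply, smul_comm c]))

section aux

variable {S : Type*} [TopologicalSpace S] {A : Type*} [CommRing A]
    {M : Type*} [AddCommGroup M] [Module A M]

lemma lcTensorMap_tmul_apply (f : LocallyConstant S A) (m : M) (s : S) :
    lcTensorMap S A M (f ⊗ₜ m) s = f s • m := by
  simp [lcTensorMap]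

lemma lc_sum_apply {Y : Type*} [AddCommMonoid Y] {ι : Type*} (s : Finset ι)
    (f : ι → LocallyConstant S Y) (x : S) :
    (∑ i ∈ s, f i) x = ∑ i ∈ s, f i x :=
  map_sum (LocallyConstant.evalₗ ℕ x) f s

lemma charFn_apply {U : Set S} (hU : IsClopen U) (s : S) [Decidable (s ∈ U)] :
    LocallyConstant.charFn A hU s = if s ∈ U then 1 else 0 := by
  have := congrFun (LocallyConstant.coe_charFn (X := S) A hU) s
  rw [this, Set.indicator_apply]
  split <;> simp

end aux

/-- For a profinite set `S`, a commutative ring `A` and an `A`-module `M`, the natural map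
`LC(S,A) ⊗_A M → LC(S,M)`, `f ⊗ m ↦ (s ↦ f(s) • m)`, is an isomorphism of `A`-modules. -/
theorem lcTensorMap_bijective (S : Type*) [TopologicalSpace S] [CompactSpace S] [T2Space S]
    [TotallyDisconnectedSpace S] (A : Type*) [CommRing A]
    (M : Type*) [AddCommGroup M] [Module A M] :
    Function.Bijective (lcTensorMap S A M) := by
  classical
  constructor
  · -- injectivity
    rw [injective_iff_map_eq_zero]
    intro x hx
    obtain ⟨t, rfl⟩ := TensorProduct.exists_finset x
    have hx' : ∀ s : S, ∑ p ∈ t, p.1 s • p.2 = 0 := by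
      intro s
      have := congrFun (congrArg (fun g : LocallyConstant S M => (g : S → M)) hx) s
      rw [map_sum] at this
      simpa [lc_sum_apply, lcTensorMap_tmul_apply] using this
    -- combine all first components into one locally constant function
    set F : S → (t → A) := fun s p => p.1.1 s with hF_def
    have hF : IsLocallyConstant F := by
      rw [IsLocallyConstant.iff_isOpen_fiber]
      intro v
      have : F ⁻¹' {v} = ⋂ p ∈ (Finset.univ : Finset t), {s | p.1.1 s = v p} := by
        ext s
        simp [hF_def, funext_iff]
      rw [this]
      exact isOpen_biInter_finset fun p _ =>
        (p.1.1.isLocallyConstant.isClopen_fiber (v p)).2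
    have hfin : (Set.range F).Finite := hF.range_finite
    set V : Finset (t → A) := hfin.toFinset with hV_def
    have hclopen : ∀ v : t → A, IsClopen (F ⁻¹' {v}) := fun v =>
      ⟨hF.isClosed_fiber v, hF.isOpen_fiber v⟩
    have key : ∀ p : t, (p : LocallyConstant S A × M).1 =
        ∑ v ∈ V, v p • LocallyConstant.charFn A (hclopen v) := by
      intro p
      ext s
      rw [lc_sum_apply]
      simp only [LocallyConstant.smul_apply, charFn_apply, Set.mem_preimage,
        Set.mem_singleton_iff, smul_eq_mul, mul_ite, mul_one, mul_zero]
      rw [Finset.sum_ite_eq V (F s) (fun v => v p)]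
      simp [hV_def, hF_def]
    have hm : ∀ v ∈ V, (∑ p ∈ t.attach, v p • (p : LocallyConstant S A × M).2) = 0 := by
      intro v hv
      rw [hV_def, Set.Finite.mem_toFinset] at hv
      obtain ⟨s, rfl⟩ := hv
      calc (∑ p ∈ t.attach, F s p • (p : LocallyConstant S A × M).2)
          = ∑ p ∈ t.attach, (p : LocallyConstant S A × M).1 s •
              (p : LocallyConstant S A × M).2 := rfl
        _ = ∑ p ∈ t, p.1 s • p.2 := Finset.sum_attach t (fun q => q.1 s • q.2)
        _ = 0 := hx' s
    calc (∑ p ∈ t, p.1 ⊗ₜ[A] p.2)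
        = ∑ p ∈ t.attach, (p : LocallyConstant S A × M).1 ⊗ₜ[A]
            (p : LocallyConstant S A × M).2 := (Finset.sum_attach t (fun q => q.1 ⊗ₜ[A] q.2)).symm
      _ = ∑ p ∈ t.attach, (∑ v ∈ V, v p • LocallyConstant.charFn A (hclopen v)) ⊗ₜ[A]
            (p : LocallyConstant S A × M).2 := by
          refine Finset.sum_congr rfl fun p _ => ?_; rw [← key p]
      _ = ∑ p ∈ t.attach, ∑ v ∈ V, LocallyConstant.charFn A (hclopen v) ⊗ₜ[A]
            (v p • (p : LocallyConstant S A × M).2) := by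
          refine Finset.sum_congr rfl fun p _ => ?_
          rw [TensorProduct.sum_tmul]
          exact Finset.sum_congr rfl fun v _ => by rw [TensorProduct.smul_tmul]
      _ = ∑ v ∈ V, LocallyConstant.charFn A (hclopen v) ⊗ₜ[A]
            (∑ p ∈ t.attach, v p • (p : LocallyConstant S A × M).2) := by
          rw [Finset.sum_comm]
          exact Finset.sum_congr rfl fun v _ => (TensorProduct.tmul_sum _ _ _).symm
      _ = 0 := Finset.sum_eq_zero fun v hv => by rw [hm v hv, TensorProduct.tmul_zero]
  · -- surjectivity
    intro g
    have hfin : (Set.range g).Finite := g.range_finite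
    refine ⟨∑ m ∈ hfin.toFinset,
      LocallyConstant.charFn A (g.isLocallyConstant.isClopen_fiber m) ⊗ₜ m, ?_⟩
    ext s
    rw [map_sum, lc_sum_apply]
    simp only [lcTensorMap_tmul_apply, charFn_apply, Set.mem_setOf_eq,
      ite_smul, one_smul, zero_smul]
    simp only [LocallyConstant.toFun_eq_coe]
    rw [show (∑ x ∈ hfin.toFinset, if g s = x then x else 0) =
        (if g s ∈ hfin.toFinset then g s else 0) from Finset.sum_ite_eq _ _ _]
    simp
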